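/- Let m ∈ ℕ and λ₀, …, λ_m ∈ ℂ; define gᵢ(r) := Σ_{j=i}^{m} (λⱼ/(j−i+1))·C(j, j−i)·r^{j−i+1} for 0 ≤ i ≤ m, and let σ be the action of (ℂ², +) on ℂ² given by (t₁,t₂)·_σ(x,y) = (x + Σ_{i=0}^{m} gᵢ(t₁)·yⁱ + t₂ , y + t₁). Let τ be the action given by (s₁,s₂)·_τ(x,y) = (x + λ·Σ_{i=0}^{m} (1/(m−i+1))·C(m, m−i)·s₁^{m−i+1}·yⁱ + s₂ , y + s₁), where λ := a·λ_m. Then for every a ∈ ℂ with a ≠ 0 and every e ∈ ℂ, there exist a polynomial h ∈ ℂ[y] of degree at most m and an additive group automorphism φ of (ℂ², +) such that, setting F(x,y) := (a·x + h(y), y + e), one has F((t₁,t₂)·_σ(x,y)) = φ(t₁,t₂)·_τ F(x,y) for all (t₁,t₂) ∈ ℂ² and (x,y) ∈ ℂ². In particular, every action of the above form σ is equivalent to τ_{λ_m}. -/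

import Mathlib

open Finset

/-- `gfun m l i r = ∑_{j=i}^{m} (l j/(j-i+1)) * C(j, j-i) * r^(j-i+1)`. -/
noncomputable def gfun (m : ℕ) (l : ℕ → ℂ) (i : ℕ) (r : ℂ) : ℂ :=
  ∑ j ∈ Finset.Icc i m, (l j / ((j - i + 1 : ℕ) : ℂ)) * ((j.choose (j - i) : ℕ) : ℂ) * r ^ (j - i + 1)

/-- The action `σ : (t₁,t₂)·(x,y) = (x + Σᵢ gᵢ(t₁) yⁱ + t₂ , y + t₁)`. -/
noncomputable def sigmaAct (m : ℕ) (l : ℕ → ℂ) (t z : ℂ × ℂ) : ℂ × ℂ :=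
  (z.1 + ∑ i ∈ Finset.range (m + 1), gfun m l i t.1 * z.2 ^ i + t.2, z.2 + t.1)

/-- The action `τ_λ : (s₁,s₂)·(x,y) =
`(x + λ Σᵢ (1/(m-i+1)) C(m, m-i) s₁^(m-i+1) yⁱ + s₂ , y + s₁)`. -/
noncomputable def tauAct (m : ℕ) (lam : ℂ) (s z : ℂ × ℂ) : ℂ × ℂ :=
  (z.1 + lam * ∑ i ∈ Finset.range (m + 1),
      (1 / ((m - i + 1 : ℕ) : ℂ)) * ((m.choose (m - i) : ℕ) : ℂ) * s.1 ^ (m - i + 1) * z.2 ^ i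
    + s.2,
   z.2 + s.1)

/-! The identity `∑ᵢ gᵢ(r) yⁱ = G(y + r) - G(y)`, where `G(y) = ∑ⱼ λⱼ y^(j+1)/(j+1)`, shows that `σ`
is the translation `(x, y) ↦ (x + t₂, y + t₁)` with `x` twisted by the increment of `G`, and `τ_λ`
is the same with `G` replaced by `λ y^(m+1)/(m+1)`. Under `F(x, y) = (a x + h(y), y + e)`, the
translation twisted by `P` becomes the one twisted by `Q` (with `t₂` rescaled by `a`) as soon as
`a P + h = Q(· + e)`, so we take `h = a λₘ (y + e)^(m+1)/(m+1) - a G`; its leading terms cancel. -/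

open Polynomial

theorem add_pow_succ_sub_pow_succ {R : Type*} [CommRing R] (n : ℕ) (y r : R) :
    (y + r) ^ (n + 1) - y ^ (n + 1) =
      ∑ k ∈ range (n + 1), y ^ k * r ^ (n + 1 - k) * ((n + 1).choose k : R) := by
  rw [add_pow, sum_range_succ]
  simp

theorem Polynomial.degree_X_add_C_pow_succ_sub_X_pow_succ_le {R : Type*} [CommRing R]
    (e : R) (n : ℕ) : ((X + C e) ^ (n + 1) - X ^ (n + 1)).degree ≤ (n : WithBot ℕ) := by
  rw [add_pow_succ_sub_pow_succ, ← mem_degreeLE]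
  refine Submodule.sum_mem _ fun k hk => mem_degreeLE.2 ?_
  rw [← C_pow, ← Polynomial.C_eq_natCast, mul_assoc, ← C_mul, mul_comm]
  exact (degree_C_mul_X_pow_le _ _).trans (by exact_mod_cast mem_range_succ_iff.1 hk)

theorem sum_inv_mul_choose_mul_pow {K : Type*} [Field K] [CharZero K] (n : ℕ) (r y : K) :
    ∑ i ∈ range (n + 1),
        1 / ((n - i + 1 : ℕ) : K) * ((n.choose (n - i) : ℕ) : K) * r ^ (n - i + 1) * y ^ i =
      ((y + r) ^ (n + 1) - y ^ (n + 1)) / (n + 1 : ℕ) := by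
  rw [add_pow_succ_sub_pow_succ, sum_div]
  refine sum_congr rfl fun i hi => ?_
  have hin : i ≤ n := mem_range_succ_iff.1 hi
  have hchoose : n.choose (n - i) * (n + 1) = (n + 1).choose i * (n - i + 1) := by
    rw [Nat.choose_symm hin, Nat.choose_mul_succ_eq, Nat.sub_add_comm hin]
  have hcoef : 1 / ((n - i + 1 : ℕ) : K) * ((n.choose (n - i) : ℕ) : K) =
      ((n + 1).choose i : ℕ) / ((n + 1 : ℕ) : K) := by
    rw [one_div_mul_eq_div, div_eq_div_iff (Nat.cast_ne_zero.2 (Nat.succ_ne_zero _))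
      (Nat.cast_ne_zero.2 (Nat.succ_ne_zero _))]
    exact_mod_cast hchoose
  rw [hcoef, Nat.sub_add_comm hin]
  ring

def twistedTranslation {R : Type*} [CommRing R] (P : R → R) (t z : R × R) : R × R :=
  (z.1 + (P (z.2 + t.1) - P z.2) + t.2, z.2 + t.1)

theorem twistedTranslation_conj {R : Type*} [CommRing R] {P Q h : R → R} {a e : R}
    (hPQ : ∀ y, a * P y + h y = Q (y + e)) (t z : R × R) :
    (a * (twistedTranslation P t z).1 + h (twistedTranslation P t z).2,
        (twistedTranslation P t z).2 + e) =
      twistedTranslation Q (t.1, a * t.2) (a * z.1 + h z.2, z.2 + e) := by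
  simp only [twistedTranslation, Prod.mk.injEq]
  constructor
  · have hshift := hPQ (z.2 + t.1)
    rw [add_right_comm] at hshift
    linear_combination hshift - hPQ z.2
  · ring

noncomputable def primitive (m : ℕ) (l : ℕ → ℂ) : ℂ[X] :=
  ∑ j ∈ range (m + 1), C (l j / (j + 1 : ℕ)) * X ^ (j + 1)

theorem sum_gfun_mul_pow (m : ℕ) (l : ℕ → ℂ) (r y : ℂ) :
    ∑ i ∈ range (m + 1), gfun m l i r * y ^ i =
      (primitive m l).eval (y + r) - (primitive m l).eval y := by
  simp only [gfun, sum_mul, primitive, eval_finsetSum, eval_mul, eval_C, eval_pow, eval_X,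
    ← sum_sub_distrib]
  rw [sum_comm' (t' := range (m + 1)) (s' := fun j => range (j + 1))
    (fun i j => by simp only [mem_range, mem_Icc]; omega)]
  refine sum_congr rfl fun j _ => ?_
  have hj := congrArg (l j * ·) (sum_inv_mul_choose_mul_pow j r y)
  simp only [mul_sum] at hj
  convert hj using 1
  · exact sum_congr rfl fun i _ => by ring
  · ring

theorem sigmaAct_eq_twistedTranslation (m : ℕ) (l : ℕ → ℂ) :
    sigmaAct m l = twistedTranslation (primitive m l).eval := by
  ext t z <;> simp [sigmaAct, twistedTranslation, sum_gfun_mul_pow]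

theorem tauAct_eq_twistedTranslation (m : ℕ) (lam : ℂ) :
    tauAct m lam = twistedTranslation (fun y => lam * y ^ (m + 1) / (m + 1 : ℕ)) := by
  ext s z
  · simp only [tauAct, twistedTranslation, sum_inv_mul_choose_mul_pow]
    ring
  · rfl

noncomputable def normalizer (m : ℕ) (l : ℕ → ℂ) (a e : ℂ) : ℂ[X] :=
  C (a * l m / (m + 1 : ℕ)) * (X + C e) ^ (m + 1) - C a * primitive m l

theorem eval_normalizer (m : ℕ) (l : ℕ → ℂ) (a e y : ℂ) :
    a * (primitive m l).eval y + (normalizer m l a e).eval y =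
      a * l m * (y + e) ^ (m + 1) / (m + 1 : ℕ) := by
  simp only [normalizer, eval_sub, eval_mul, eval_C, eval_pow, eval_add, eval_X]
  ring

theorem degree_normalizer_le (m : ℕ) (l : ℕ → ℂ) (a e : ℂ) :
    (normalizer m l a e).degree ≤ m := by
  have hsplit : normalizer m l a e =
      C (a * l m / (m + 1 : ℕ)) * ((X + C e) ^ (m + 1) - X ^ (m + 1)) -
        C a * ∑ j ∈ range m, C (l j / (j + 1 : ℕ)) * X ^ (j + 1) := by
    have hC : C (a * l m / (m + 1 : ℕ)) = C a * C (l m / (m + 1 : ℕ)) := by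
      rw [← C_mul, mul_div_assoc]
    rw [normalizer, primitive, sum_range_succ, hC]
    ring
  rw [hsplit, ← mem_degreeLE]
  refine Submodule.sub_mem _ ?_ ?_ <;> rw [← smul_eq_C_mul] <;> refine Submodule.smul_mem _ _ ?_
  · exact mem_degreeLE.2 (degree_X_add_C_pow_succ_sub_X_pow_succ_le e m)
  · refine Submodule.sum_mem _ fun j hj => mem_degreeLE.2 ?_
    exact (degree_C_mul_X_pow_le _ _).trans (by exact_mod_cast mem_range.1 hj)

theorem normalizer_conj (m : ℕ) (l : ℕ → ℂ) (a e : ℂ) (t z : ℂ × ℂ) :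
    (a * (sigmaAct m l t z).1 + (normalizer m l a e).eval (sigmaAct m l t z).2,
        (sigmaAct m l t z).2 + e) =
      tauAct m (a * l m) (t.1, a * t.2) (a * z.1 + (normalizer m l a e).eval z.2, z.2 + e) := by
  rw [sigmaAct_eq_twistedTranslation, tauAct_eq_twistedTranslation]
  exact twistedTranslation_conj (Q := fun y => a * l m * y ^ (m + 1) / (m + 1 : ℕ))
    (eval_normalizer m l a e) t z

/-- for every `a ≠ 0` and `e ∈ ℂ` there are a polynomial `h` of degree at
most `m` and an additive automorphism `φ` of `(ℂ²,+)` such that, with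
`F(x,y) := (a·x + h(y), y + e)`, one has `F(σ(t,z)) = τ_{a·λ_m}(φ(t), F(z))`.
In particular, `σ` is equivalent to `τ_{λ_m}`. -/
theorem sigma_equivalent_tau (m : ℕ) (l : ℕ → ℂ) :
    (∀ a : ℂ, a ≠ 0 → ∀ e : ℂ,
      ∃ (h : Polynomial ℂ) (φ : (ℂ × ℂ) ≃+ ℂ × ℂ),
        h.degree ≤ (m : WithBot ℕ) ∧
        ∀ t z : ℂ × ℂ,
          (a * (sigmaAct m l t z).1 + h.eval (sigmaAct m l t z).2, (sigmaAct m l t z).2 + e) =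
            tauAct m (a * l m) (φ t) (a * z.1 + h.eval z.2, z.2 + e)) ∧
    (∃ (F : (ℂ × ℂ) ≃ ℂ × ℂ) (φ : (ℂ × ℂ) ≃+ ℂ × ℂ),
      ∀ t z : ℂ × ℂ, F (sigmaAct m l t z) = tauAct m (l m) (φ t) (F z)) := by
  refine ⟨fun a ha e => ⟨normalizer m l a e,
    (AddEquiv.refl ℂ).prodCongr (LinearEquiv.smulOfNeZero ℂ ℂ a ha).toAddEquiv,
    degree_normalizer_le m l a e, normalizer_conj m l a e⟩, ?_⟩
  let h := normalizer m l 1 0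
  exact ⟨⟨fun z => (z.1 + h.eval z.2, z.2), fun z => (z.1 - h.eval z.2, z.2),
    fun z => by simp, fun z => by simp⟩, AddEquiv.refl _,
    fun t z => by simpa using normalizer_conj m l 1 0 t z⟩
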